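/- arXiv:2006.09577 — 3 statements merged into one kernel-verified Lean document; each statement's English description precedes it below -/
import Mathlib

section
/- Any edge-coloring of a complete graph on a finite vertex set S that has a leftover structure uses exactly |S| − 1 distinct colors (for |S| ≥ 1). -/
namespace EG

/-- The set of colors appearing on edges inside `A`. -/
def colorsOn {V C : Type} (f : V → V → C) (A : Finset V) : Set C :=
  {c | ∃ a ∈ A, ∃ b ∈ A, a ≠ b ∧ f a b = c}

/-- `S` has a leftover structure under the edge-coloring `f`. -/
inductive Leftover {V C : Type} [DecidableEq V] (f : V → V → C) : Finset V → Prop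
  | single (v : V) : Leftover f {v}
  | split (A B : Finset V) (α : C)
      (hA : Leftover f A) (hB : Leftover f B) (hdisj : Disjoint A B)
      (hcolors : colorsOn f A ∩ colorsOn f B = ∅)
      (hcross : ∀ a ∈ A, ∀ b ∈ B, f a b = α ∧ f b a = α)
      (hαA : α ∉ colorsOn f A) (hαB : α ∉ colorsOn f B) :
      Leftover f (A ∪ B)

lemma colorsOn_finite {V C : Type} (f : V → V → C) (A : Finset V) :
    (colorsOn f A).Finite := by
  apply Set.Finite.subset (Set.Finite.image (fun p : V × V => f p.1 p.2)
    (A.finite_toSet.prod A.finite_toSet))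
  rintro c ⟨a, ha, b, hb, _, rfl⟩
  exact ⟨(a, b), ⟨ha, hb⟩, rfl⟩

lemma leftover_nonempty {V C : Type} [DecidableEq V] {f : V → V → C} {S : Finset V}
    (h : Leftover f S) : S.Nonempty := by
  induction h with
  | single v => exact ⟨v, by simp⟩
  | split A B α hA hB hdisj hcolors hcross hαA hαB ihA ihB =>
      exact ihA.mono Finset.subset_union_left

lemma colorsOn_split {V C : Type} [DecidableEq V] {f : V → V → C} {A B : Finset V} {α : C}
    (hAne : A.Nonempty) (hBne : B.Nonempty)
    (hcross : ∀ a ∈ A, ∀ b ∈ B, f a b = α ∧ f b a = α)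
    (hdab : ∀ a ∈ A, ∀ b ∈ B, a ≠ b) :
    colorsOn f (A ∪ B) = insert α (colorsOn f A ∪ colorsOn f B) := by
  ext c
  constructor
  · rintro ⟨a, ha, b, hb, hne, rfl⟩
    simp only [Finset.mem_union] at ha hb
    rcases ha with ha | ha <;> rcases hb with hb | hb
    · exact Or.inr (Or.inl ⟨a, ha, b, hb, hne, rfl⟩)
    · exact Or.inl (hcross a ha b hb).1
    · exact Or.inl (hcross b hb a ha).2
    · exact Or.inr (Or.inr ⟨a, ha, b, hb, hne, rfl⟩)
  · rintro (rfl | ⟨a, ha, b, hb, hne, rfl⟩ | ⟨a, ha, b, hb, hne, rfl⟩)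
    · obtain ⟨a, ha⟩ := hAne
      obtain ⟨b, hb⟩ := hBne
      have hab : a ≠ b := hdab a ha b hb
      exact ⟨a, Finset.mem_union_left _ ha, b, Finset.mem_union_right _ hb, hab,
        (hcross a ha b hb).1⟩
    · exact ⟨a, Finset.mem_union_left _ ha, b, Finset.mem_union_left _ hb, hne, rfl⟩
    · exact ⟨a, Finset.mem_union_right _ ha, b, Finset.mem_union_right _ hb, hne, rfl⟩

/-- An edge-coloring with a leftover structure on `S` uses exactly `|S| - 1` distinct
colors on the edges within `S`. -/
theorem leftover_colors_card {V C : Type} [DecidableEq V] (f : V → V → C)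
    (S : Finset V) (hS : Leftover f S) :
    (colorsOn f S).ncard = S.card - 1 := by
  induction hS with
  | single v =>
      have : colorsOn f ({v} : Finset V) = ∅ := by
        ext c
        simp only [Set.mem_empty_iff_false, iff_false]
        rintro ⟨a, ha, b, hb, hne, _⟩
        simp only [Finset.mem_singleton] at ha hb
        exact hne (ha.trans hb.symm)
      simp [this]
  | split A B α hA hB hdisj hcolors hcross hαA hαB ihA ihB =>
      have hAne := leftover_nonempty hA
      have hBne := leftover_nonempty hB
      have hdab : ∀ a ∈ A, ∀ b ∈ B, a ≠ b := fun a ha b hb h =>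
        Finset.disjoint_left.mp hdisj ha (h ▸ hb)
      rw [colorsOn_split hAne hBne hcross hdab]
      have hfA := colorsOn_finite f A
      have hfB := colorsOn_finite f B
      have hαnot : α ∉ colorsOn f A ∪ colorsOn f B := by
        rintro (h | h); exacts [hαA h, hαB h]
      rw [Set.ncard_insert_of_notMem hαnot (hfA.union hfB),
        Set.ncard_union_eq (by rw [Set.disjoint_iff_inter_eq_empty]; exact hcolors) hfA hfB,
        ihA, ihB, Finset.card_union_of_disjoint hdisj]
      have h1 : 1 ≤ A.card := Finset.card_pos.mpr hAne
      have h2 : 1 ≤ B.card := Finset.card_pos.mpr hBne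
      omega

end EG
end

section
/- If a set S of vertices has a leftover structure under an edge-coloring f, then every nonempty subset T ⊆ S also has a leftover structure under f. -/
namespace EG

lemma colorsOn_mono {V C : Type} (f : V → V → C) {A B : Finset V} (h : A ⊆ B) :
    colorsOn f A ⊆ colorsOn f B := by
  rintro c ⟨a, ha, b, hb, hab, rfl⟩
  exact ⟨a, h ha, b, h hb, hab, rfl⟩

/-- Every nonempty subset of a set with a leftover structure also has a leftover
structure. -/
theorem leftover_subset {V C : Type} [DecidableEq V] (f : V → V → C)
    (S T : Finset V) (hS : Leftover f S) (hTS : T ⊆ S) (hT : T.Nonempty) :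
    Leftover f T := by
  induction hS generalizing T with
  | single v =>
    have : T = {v} := Finset.eq_singleton_iff_nonempty_unique_mem.mpr
      ⟨hT, fun x hx => Finset.mem_singleton.mp (hTS hx)⟩
    rw [this]; exact Leftover.single v
  | split A B α hA hB hdisj hcolors hcross hαA hαB ihA ihB =>
    have hTsplit : T = (T ∩ A) ∪ (T ∩ B) := by
      ext x
      simp only [Finset.mem_union, Finset.mem_inter]
      constructor
      · intro hx
        rcases Finset.mem_union.mp (hTS hx) with h | h
        · exact Or.inl ⟨hx, h⟩
        · exact Or.inr ⟨hx, h⟩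
      · rintro (⟨h, _⟩ | ⟨h, _⟩) <;> exact h
    rcases Finset.eq_empty_or_nonempty (T ∩ A) with hTA | hTA
    · have hTB : T ⊆ B := by
        intro x hx
        rcases Finset.mem_union.mp (hTS hx) with h | h
        · exact absurd (Finset.mem_inter.mpr ⟨hx, h⟩) (by simp [hTA])
        · exact h
      exact ihB _ hTB hT
    rcases Finset.eq_empty_or_nonempty (T ∩ B) with hTB | hTB
    · have hTA' : T ⊆ A := by
        intro x hx
        rcases Finset.mem_union.mp (hTS hx) with h | h
        · exact h
        · exact absurd (Finset.mem_inter.mpr ⟨hx, h⟩) (by simp [hTB])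
      exact ihA _ hTA' hT
    · rw [hTsplit]
      have hsubA : T ∩ A ⊆ A := Finset.inter_subset_right
      have hsubB : T ∩ B ⊆ B := Finset.inter_subset_right
      refine Leftover.split _ _ α (ihA _ hsubA hTA) (ihB _ hsubB hTB)
        (hdisj.mono hsubA hsubB) ?_ ?_ ?_ ?_
      · apply Set.eq_empty_of_subset_empty
        rw [← hcolors]
        exact Set.inter_subset_inter (colorsOn_mono f hsubA) (colorsOn_mono f hsubB)
      · exact fun a ha b hb => hcross a (hsubA ha) b (hsubB hb)
      · exact fun h => hαA (colorsOn_mono f hsubA h)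
      · exact fun h => hαB (colorsOn_mono f hsubB h)


end EG
end

section
/- Let q be an odd prime power, d ≥ 1, and let s₁,…,s_t ∈ (𝔽_q*)^d be linearly independent vectors. Suppose a, b ∈ (𝔽_q*)^d satisfy φ_d(a,b) = φ_d(a,s_i) = α for all i, and φ_d(b,s_i) = β for all i, for some colors α, β. Then s₁,…,s_t, b are linearly independent. -/
open Finset

namespace EG

/-- The color set `C_d = DOT ⊔ ZERO ⊔ UP ⊔ DOWN`, where `DOT = 𝔽_q*` and
`ZERO`, `UP`, `DOWN` are copies of `{1,…,d} × 𝔽_q`. -/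
inductive Color (d : ℕ) (F : Type) [Zero F] where
  | dot  : {a : F // a ≠ 0} → Color d F
  | zero : Fin d → F → Color d F
  | up   : Fin d → F → Color d F
  | down : Fin d → F → Color d F

variable {F : Type} [Field F] [Fintype F] [LinearOrder F] {d : ℕ} [NeZero d]

/-- The standard dot product. -/
def dotp (x y : Fin d → F) : F := ∑ i, x i * y i

/-- Lexicographic order on vectors induced by the linear order on `F`. -/
def lexLt (x y : Fin d → F) : Prop :=
  ∃ i, (∀ j, j < i → x j = y j) ∧ x i < y i

/-- The first coordinate at which `x` and `y` differ. -/
noncomputable def firstDiff (x y : Fin d → F) : Fin d :=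
  if h : (Finset.univ.filter fun i => x i ≠ y i).Nonempty then
    (Finset.univ.filter fun i => x i ≠ y i).min' h
  else ⟨0, Nat.pos_of_ne_zero (NeZero.ne d)⟩

/-- The Modified Dot Product coloring, defined for `x` lexicographically below `y`. -/
noncomputable def phiAux (x y : Fin d → F) : Color d F :=
  if h0 : dotp x y = 0 then
    .zero (firstDiff x y) (x (firstDiff x y) + y (firstDiff x y))
  else if dotp x y = dotp x x then
    .up (firstDiff x y) (x (firstDiff x y) + y (firstDiff x y))
  else if dotp x y = dotp y y then
    .down (firstDiff x y) (x (firstDiff x y) + y (firstDiff x y))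
  else .dot ⟨dotp x y, h0⟩

open scoped Classical in
/-- The Modified Dot Product coloring `φ_d`, as a symmetric function. -/
noncomputable def phi (x y : Fin d → F) : Color d F :=
  if lexLt x y then phiAux x y else phiAux y x

/-- Membership in `(𝔽_q*)^d`: all coordinates nonzero. -/
def NZ (x : Fin d → F) : Prop := ∀ i, x i ≠ 0

/-- `T` contains a `t`-falling star under the coloring `f`. -/
def IsFallingStar (f : (Fin d → F) → (Fin d → F) → Color d F)
    (T : Set (Fin d → F)) (t : ℕ) : Prop :=
  ∃ s : Fin t → (Fin d → F), Function.Injective s ∧ (∀ i, s i ∈ T) ∧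
    ∃ α : Fin t → Color d F, ∀ i j : Fin t, j < i → f (s i) (s j) = α i

-- auxiliary lemmas

lemma dotp_comm (x y : Fin d → F) : dotp x y = dotp y x := by
  unfold dotp; exact Finset.sum_congr rfl fun i _ => mul_comm _ _

lemma firstDiff_comm (x y : Fin d → F) : firstDiff x y = firstDiff y x := by
  have h : (Finset.univ.filter fun i => x i ≠ y i)
      = (Finset.univ.filter fun i => y i ≠ x i) := by
    ext i; simp [ne_comm]
  unfold firstDiff
  rw [h]

lemma firstDiff_ne {x y : Fin d → F} (h : x ≠ y) :
    x (firstDiff x y) ≠ y (firstDiff x y) := by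
  have hne : (Finset.univ.filter fun i => x i ≠ y i).Nonempty := by
    by_contra h'
    rw [Finset.not_nonempty_iff_eq_empty, Finset.filter_eq_empty_iff] at h'
    exact h (funext fun i => by
      have := h' (Finset.mem_univ i); simpa using this)
  have hmem := Finset.min'_mem _ hne
  rw [Finset.mem_filter] at hmem
  unfold firstDiff
  rw [dif_pos hne]
  exact hmem.2

lemma phiAux_coord {x y : Fin d → F} {j : Fin d} {c : F}
    (h : phiAux x y = .zero j c ∨ phiAux x y = .up j c ∨ phiAux x y = .down j c) :
    firstDiff x y = j ∧ x j + y j = c := by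
  unfold phiAux at h
  split_ifs at h <;>
    rcases h with h | h | h <;>
    first
      | (exact Color.noConfusion h)
      | (exact h.elim)
      | (injection h with h1 h2; exact ⟨h1, h1 ▸ h2⟩)

lemma phi_coord {x y : Fin d → F} {j : Fin d} {c : F}
    (h : phi x y = .zero j c ∨ phi x y = .up j c ∨ phi x y = .down j c) :
    firstDiff x y = j ∧ x j + y j = c := by
  unfold phi at h
  split_ifs at h
  · exact phiAux_coord h
  · obtain ⟨h1, h2⟩ := phiAux_coord h
    exact ⟨(firstDiff_comm x y).trans h1, by rw [add_comm]; exact h2⟩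

lemma phiAux_dot {x y : Fin d → F} {v : {a : F // a ≠ 0}}
    (h : phiAux x y = .dot v) :
    dotp x y = v.1 ∧ dotp x y ≠ dotp x x ∧ dotp x y ≠ dotp y y := by
  unfold phiAux at h
  split_ifs at h with h0 hx hy
  all_goals first
    | exact Color.noConfusion h
    | exact h.elim
    | (injection h with h1; exact ⟨congrArg Subtype.val h1, hx, hy⟩)

lemma phi_dot {x y : Fin d → F} {v : {a : F // a ≠ 0}}
    (h : phi x y = .dot v) :
    dotp x y = v.1 ∧ dotp x y ≠ dotp x x ∧ dotp x y ≠ dotp y y := by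
  unfold phi at h
  split_ifs at h
  · exact phiAux_dot h
  · obtain ⟨h1, h2, h3⟩ := phiAux_dot h
    rw [dotp_comm y x] at h1 h2 h3
    exact ⟨h1, h3, h2⟩

/-- If `s₁, …, s_t` are linearly independent vectors of `(𝔽_q*)^d` and `a, b ∈ (𝔽_q*)^d`
satisfy `φ_d(a,b) = φ_d(a,s_i) = α` for all `i` and `φ_d(b,s_i) = β` for all `i`, then
`s₁, …, s_t, b` are linearly independent. -/
theorem lin_indy_condition (hodd : Odd (Fintype.card F))
    {t : ℕ} (s : Fin t → (Fin d → F)) (hsnz : ∀ i, NZ (s i))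
    (hli : LinearIndependent F s)
    (a b : Fin d → F) (hanz : NZ a) (hbnz : NZ b)
    (hab : a ≠ b) (has : ∀ i, a ≠ s i) (hbs : ∀ i, b ≠ s i)
    (α β : Color d F)
    (h1 : phi a b = α) (h2 : ∀ i, phi a (s i) = α) (h3 : ∀ i, phi b (s i) = β) :
    LinearIndependent F (Fin.snoc s b : Fin (t + 1) → (Fin d → F)) := by
  rw [linearIndependent_fin_snoc]
  refine ⟨hli, fun hmem => ?_⟩
  rw [Submodule.mem_span_range_iff_exists_fun] at hmem
  obtain ⟨c, hc⟩ := hmem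
  -- coordinatewise formula
  have hcoord : ∀ k, b k = ∑ i, c i * s i k := by
    intro k
    rw [← hc]
    simp [Finset.sum_apply]
  have hdot : ∀ x : Fin d → F, dotp x b = ∑ i, c i * dotp x (s i) := by
    intro x
    unfold dotp
    calc ∑ k, x k * b k = ∑ k, ∑ i, c i * (x k * s i k) := by
          refine Finset.sum_congr rfl fun k _ => ?_
          rw [hcoord k, Finset.mul_sum]
          exact Finset.sum_congr rfl fun i _ => by ring
      _ = ∑ i, c i * ∑ k, x k * s i k := by
          rw [Finset.sum_comm]
          exact Finset.sum_congr rfl fun i _ => by rw [Finset.mul_sum]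
  -- t = 0 is impossible
  rcases Nat.eq_zero_or_pos t with ht | ht
  · subst ht
    have hb0 : b = 0 := by rw [← hc]; simp
    exact hbnz ⟨0, Nat.pos_of_ne_zero (NeZero.ne d)⟩ (by rw [hb0]; rfl)
  set i₀ : Fin t := ⟨0, ht⟩
  set S : F := ∑ i, c i with hSdef
  -- Step 1: S = 1
  have hS : S = 1 := by
    rcases α with v | ⟨j, cc⟩ | ⟨j, cc⟩ | ⟨j, cc⟩
    · -- dot case
      obtain ⟨hab1, -, -⟩ := phi_dot h1
      have hsb : ∀ i, dotp a (s i) = v.1 := fun i => (phi_dot (h2 i)).1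
      have : v.1 = S * v.1 := by
        calc v.1 = dotp a b := hab1.symm
          _ = ∑ i, c i * dotp a (s i) := hdot a
          _ = ∑ i, c i * v.1 := Finset.sum_congr rfl fun i _ => by rw [hsb i]
          _ = S * v.1 := by rw [hSdef, Finset.sum_mul]
      have h1' : 1 * v.1 = S * v.1 := by rw [one_mul]; exact this
      exact (mul_right_cancel₀ v.2 h1').symm
    all_goals {
      have hb : a j + b j = cc := (phi_coord (by first
        | exact Or.inl h1
        | exact Or.inr (Or.inl h1)
        | exact Or.inr (Or.inr h1))).2
      have hs : ∀ i, s i j = b j := by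
        intro i
        have := (phi_coord (x := a) (y := s i) (by first
          | exact Or.inl (h2 i)
          | exact Or.inr (Or.inl (h2 i))
          | exact Or.inr (Or.inr (h2 i)))).2
        have h' : a j + s i j = a j + b j := by rw [this, hb]
        exact add_left_cancel h'
      have hbj : b j = S * b j := by
        calc b j = ∑ i, c i * s i j := hcoord j
          _ = ∑ i, c i * b j := Finset.sum_congr rfl fun i _ => by rw [hs i]
          _ = S * b j := by rw [hSdef, Finset.sum_mul]
      have h1' : 1 * b j = S * b j := by rw [one_mul]; exact hbj
      exact (mul_right_cancel₀ (hbnz j) h1').symm }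
  -- Step 2: contradiction from β
  rcases β with w | ⟨j', c'⟩ | ⟨j', c'⟩ | ⟨j', c'⟩
  · -- dot case
    have hw : ∀ i, dotp b (s i) = w.1 := fun i => (phi_dot (h3 i)).1
    have hbb : dotp b b = w.1 := by
      rw [hdot b]
      calc ∑ i, c i * dotp b (s i) = ∑ i, c i * w.1 := by
            exact Finset.sum_congr rfl fun i _ => by rw [hw i]
        _ = S * w.1 := by rw [hSdef, Finset.sum_mul]
        _ = w.1 := by rw [hS, one_mul]
    have hne := (phi_dot (h3 i₀)).2.1
    rw [hw i₀, hbb] at hne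
    exact hne rfl
  all_goals {
    have key : ∀ i, firstDiff b (s i) = j' ∧ b j' + s i j' = c' := by
      intro i
      exact phi_coord (by first
        | exact Or.inl (h3 i)
        | exact Or.inr (Or.inl (h3 i))
        | exact Or.inr (Or.inr (h3 i)))
    have hs : ∀ i, s i j' = c' - b j' := fun i => by
      have := (key i).2; linear_combination this
    have hbj : b j' = c' - b j' := by
      calc b j' = ∑ i, c i * s i j' := hcoord j'
        _ = ∑ i, c i * (c' - b j') := by
            exact Finset.sum_congr rfl fun i _ => by rw [hs i]
        _ = S * (c' - b j') := by rw [hSdef, Finset.sum_mul]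
        _ = c' - b j' := by rw [hS, one_mul]
    have hne := firstDiff_ne (hbs i₀)
    rw [(key i₀).1, hs i₀] at hne
    exact hne hbj }


end EG
end
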